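/- arXiv:1801.06916 — 2 statements merged into one kernel-verified Lean document; each statement's English description precedes it below -/
import Mathlib

section
/- For every r ∈ ℕ, every s = (s_1, …, s_r) ∈ ℕ^r, every j ∈ J_s, and every n ∈ ℤ_{≥0} such that (q − 1) does not divide n, the multi-poly-Bernoulli-Carlitz number vanishes: BC_n^{s,j} = 0. -/
/-!
Every monomial of `e_C(z)` is some `z^{q^i}`, and `q^i ≡ 1 [MOD q - 1]`, so `e_C(z)^m` only
involves monomials `z^n` with `n ≡ m [MOD q - 1]`. Each term of the series defining `BC_n^{s,j}`
is a constant multiple of `e_C(z)^{q^{i_1} - 1}`, whose exponent is divisible by `q - 1`.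
-/

open Polynomial PowerSeries

noncomputable section

namespace Carlitz

variable (F : Type) [Field F] [Fintype F]

/-- `q`, the cardinality of the finite field of constants `𝔽_q`. -/
def q : ℕ := Fintype.card F

/-- The Carlitz polynomial `D_i = ∏_{j=0}^{i-1} (θ^{q^i} - θ^{q^j})` (with `D_0 = 1`). -/
def Dpoly (i : ℕ) : Polynomial F :=
  ∏ j ∈ Finset.range i, (Polynomial.X ^ (q F) ^ i - Polynomial.X ^ (q F) ^ j)

/-- The Carlitz polynomial `L_i = ∏_{j=1}^{i} (θ - θ^{q^j})` (with `L_0 = 1`). -/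
def Lpoly (i : ℕ) : Polynomial F :=
  ∏ j ∈ Finset.range i, (Polynomial.X - Polynomial.X ^ (q F) ^ (j + 1))

/-- The Carlitz factorial `Π(n) = ∏_i D_i^{n_i}` where `n = Σ_i n_i q^i` is the base-`q`
expansion of `n`.  This also equals the Carlitz gamma `Γ_{n+1}`. -/
def cfact (n : ℕ) : Polynomial F :=
  ∏ i ∈ Finset.range (Nat.digits (q F) n).length,
    (Dpoly F i) ^ ((Nat.digits (q F) n).getD i 0)

/-- The inclusion `A = 𝔽_q[θ] → k = 𝔽_q(θ)`. -/
def toK : Polynomial F →+* RatFunc F := algebraMap _ _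

/-- The Carlitz exponential `e_C(z) = Σ_{i≥0} z^{q^i}/D_i` as a power series over `k`. -/
def eC : PowerSeries (RatFunc F) :=
  PowerSeries.mk fun n => ∑ i ∈ Finset.range (n + 1),
    if (q F) ^ i = n then (toK F (Dpoly F i))⁻¹ else 0

/-- The Bernoulli-Carlitz numbers `BC_n`, defined by `Σ_n BC_n z^n/Π(n) = z/e_C(z)`:
since `e_C(z) = z · u(z)` where `u(z) = Σ_m (coeff_{m+1} e_C) z^m` has constant term `1`,
we have `z/e_C(z) = u(z)⁻¹` and `BC_n = Π(n) · coeff_n (u⁻¹)`. -/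
def BCnum (n : ℕ) : RatFunc F :=
  toK F (cfact F n) *
    PowerSeries.coeff (R := RatFunc F) n
      (PowerSeries.mk fun m => PowerSeries.coeff (R := RatFunc F) (m + 1) (eC F))⁻¹

/-- The Stirling-Carlitz numbers of the second kind `{n brace m}_C`, defined by
`Σ_n {n brace m}_C z^n/Π(n) = e_C(z)^m/Π(m)`, i.e. `{n brace m}_C = Π(n)·coeff_n(e_C^m)/Π(m)`. -/
def StC (n m : ℕ) : RatFunc F :=
  toK F (cfact F n) * PowerSeries.coeff (R := RatFunc F) n (eC F ^ m) * (toK F (cfact F m))⁻¹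

/-- The (finite) set of strictly decreasing tuples `i : Fin r → ℕ`,
`i_1 > i_2 > ⋯ > i_r ≥ 0`, with all values `< N`. -/
def decTuples (r N : ℕ) : Finset (Fin r → ℕ) :=
  (Finset.univ.filter fun i : Fin r → Fin N => ∀ a b : Fin r, a < b → i b < i a).image
    fun i l => (i l : ℕ)

/-- The leading (largest) entry `i_1` of a (strictly decreasing) tuple. -/
def lead {r : ℕ} (i : Fin r → ℕ) : ℕ := if h : 0 < r then i ⟨0, h⟩ else 0

/-- The multi-poly-Bernoulli-Carlitz numbers `BC_n^{s,j}`, defined by the generating series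
`Σ_n BC_n^{s,j} z^n/Π(n) = Li_s(e_C(z)·u_{1 j_1}, u_{2 j_2}, …, u_{r j_r})/e_C(z)
 = Σ_{i_1 > ⋯ > i_r ≥ 0} e_C(z)^{q^{i_1}-1} ∏_l u_{l j_l}^{q^{i_l}}/L_{i_l}^{s_l}`,
written out coefficientwise (here `u l` is the datum `u_{l j_l} ∈ A`; the coefficient of
`z^n` in `e_C^{q^{i_1}-1}` vanishes whenever `i_1 > n`, so the sum below is complete). -/
def MPBC {r : ℕ} (s : Fin r → ℕ) (u : Fin r → Polynomial F) (n : ℕ) : RatFunc F :=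
  toK F (cfact F n) * ∑ i ∈ decTuples r (n + 1),
    PowerSeries.coeff (R := RatFunc F) n (eC F ^ ((q F) ^ lead i - 1)) *
      ∏ l, (toK F (u l)) ^ ((q F) ^ (i l)) * ((toK F (Lpoly F (i l))) ^ (s l))⁻¹

/-- The two-variable rational function field `K₂ = 𝔽_q(θ)(t)`. -/
abbrev K2 := RatFunc (RatFunc F)

/-- The inclusion `k = 𝔽_q(θ) → 𝔽_q(θ)(t)`. -/
def liftK : RatFunc F →+* K2 F :=
  (algebraMap (Polynomial (RatFunc F)) (K2 F)).comp Polynomial.C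

/-- The inclusion `A = 𝔽_q[θ] → 𝔽_q(θ)(t)`. -/
def liftA : Polynomial F →+* K2 F := (liftK F).comp (toK F)

/-- The inclusion of constants `𝔽_q → 𝔽_q(θ)(t)`. -/
def liftF : F →+* K2 F := (liftA F).comp Polynomial.C

/-- Substitution `θ ↦ t` on a polynomial `P ∈ 𝔽_q[θ]`, landing in `𝔽_q(θ)(t)`
(where `t` is the outer variable `RatFunc.X`); e.g. `D_i|_{θ=t}`. -/
def subT (P : Polynomial F) : K2 F :=
  Polynomial.eval (RatFunc.X : K2 F) (P.map (liftF F))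

/-- Evaluation of a polynomial in `A[t]` in `𝔽_q(θ)(t)` (coefficients included via
`A → 𝔽_q(θ)`, the variable `t` sent to the outer `RatFunc.X`). -/
def evalAT (h : Polynomial (Polynomial F)) : K2 F :=
  Polynomial.eval (RatFunc.X : K2 F) (h.map (liftA F))

/-- The power series `1 - Σ_{i≥0} (∏_{j=1}^{i}(t^{q^i} - θ^{q^j})/D_i|_{θ=t}) x^{q^i}`
appearing in the definition of the Anderson-Thakur polynomials. -/
def ATgen : PowerSeries (K2 F) :=
  1 - PowerSeries.mk fun m => ∑ i ∈ Finset.range (m + 1),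
    if (q F) ^ i = m then
      (∏ j ∈ Finset.range i,
        ((RatFunc.X : K2 F) ^ (q F) ^ i - (liftK F RatFunc.X) ^ (q F) ^ (j + 1))) *
        (subT F (Dpoly F i))⁻¹
    else 0

/-- `H : ℕ → A[t]` is the family of Anderson-Thakur polynomials iff
`{1 - Σ_i (∏_{j=1}^{i}(t^{q^i} - θ^{q^j})/D_i|_{θ=t}) x^{q^i}}⁻¹ = Σ_n (H_n/Γ_{n+1}|_{θ=t}) x^n`,
i.e. the product of the left-hand factor with the right-hand series equals `1`. -/
def IsATFamily (H : ℕ → Polynomial (Polynomial F)) : Prop :=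
  ATgen F * (PowerSeries.mk fun n => evalAT F (H n) * (subT F (cfact F n))⁻¹) = 1

/-- Reduction of a rational function `x ∈ k` whose denominator is coprime to `℘`
into `A/℘A`: reduce numerator and denominator (in lowest terms) and divide. -/
def redmod (℘ : Polynomial F) (x : RatFunc F) : Polynomial F ⧸ Ideal.span {℘} :=
  Ideal.Quotient.mk (Ideal.span {℘}) x.num *
    Ring.inverse (Ideal.Quotient.mk (Ideal.span {℘}) x.denom)

/-- The finite multiple zeta value `ζ_{𝒜_k}(s)_℘ ∈ A/℘A`: the sum of
`1/(a_1^{s_1} ⋯ a_r^{s_r})` over monic `a_1, …, a_r ∈ A` with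
`deg ℘ > deg a_1 > ⋯ > deg a_r ≥ 0`. -/
def finMZV (℘ : Polynomial F) {r : ℕ} (s : Fin r → ℕ) : Polynomial F ⧸ Ideal.span {℘} :=
  ∑ᶠ a ∈ {a : Fin r → Polynomial F |
      (∀ l, (a l).Monic) ∧ (StrictAnti fun l => (a l).natDegree) ∧
        ∀ l, (a l).natDegree < ℘.natDegree},
    ∏ l, Ring.inverse (Ideal.Quotient.mk (Ideal.span {℘}) (a l) ^ (s l))

/-- The finite Carlitz multiple polylogarithm
`Li_{𝒜_k,s}(u_1, …, u_r)_℘ = Σ_{deg ℘ > i_1 > ⋯ > i_r ≥ 0} u_1^{q^{i_1}} ⋯ u_r^{q^{i_r}}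
/ (L_{i_1}^{s_1} ⋯ L_{i_r}^{s_r}) ∈ A/℘A`. -/
def finCMPL (℘ : Polynomial F) {r : ℕ} (s : Fin r → ℕ) (u : Fin r → Polynomial F) :
    Polynomial F ⧸ Ideal.span {℘} :=
  ∑ i ∈ decTuples r ℘.natDegree,
    ∏ l, Ideal.Quotient.mk (Ideal.span {℘}) (u l) ^ ((q F) ^ (i l)) *
      Ring.inverse (Ideal.Quotient.mk (Ideal.span {℘}) (Lpoly F (i l)) ^ (s l))

theorem _root_.PowerSeries.coeff_pow_eq_zero_of_not_modEq {R : Type*} [CommSemiring R]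
    {f : PowerSeries R} {d : ℕ} (hf : ∀ a, ¬ a ≡ 1 [MOD d] → PowerSeries.coeff a f = 0)
    (m n : ℕ) (hnm : ¬ n ≡ m [MOD d]) : PowerSeries.coeff n (f ^ m) = 0 := by
  induction m generalizing n with
  | zero =>
    have hn : n ≠ 0 := by rintro rfl; exact hnm rfl
    simp [PowerSeries.coeff_one, hn]
  | succ m ih =>
    rw [pow_succ, PowerSeries.coeff_mul]
    refine Finset.sum_eq_zero fun p hp => ?_
    rw [Finset.HasAntidiagonal.mem_antidiagonal] at hp
    by_cases hp₂ : p.2 ≡ 1 [MOD d]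
    · have hp₁ : ¬ p.1 ≡ m [MOD d] := fun hp₁ => hnm (hp ▸ hp₁.add hp₂)
      rw [ih p.1 hp₁, zero_mul]
    · rw [hf p.2 hp₂, mul_zero]

lemma q_pow_modEq_one (i : ℕ) : q F ^ i ≡ 1 [MOD q F - 1] := by
  have hq : 1 ≤ q F := Fintype.card_pos
  simpa using (Nat.modEq_sub hq).pow i

lemma coeff_eC_eq_zero_of_not_modEq_one (a : ℕ) (ha : ¬ a ≡ 1 [MOD q F - 1]) :
    PowerSeries.coeff a (eC F) = 0 := by
  rw [eC, PowerSeries.coeff_mk]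
  exact Finset.sum_eq_zero fun i _ =>
    if_neg fun (hi : q F ^ i = a) => ha (hi ▸ q_pow_modEq_one F i)

lemma coeff_eC_pow_q_pow_sub_one_eq_zero (i n : ℕ) (hn : ¬ (q F - 1) ∣ n) :
    PowerSeries.coeff n (eC F ^ (q F ^ i - 1)) = 0 := by
  have hdvd : q F - 1 ∣ q F ^ i - 1 := by simpa using Nat.sub_dvd_pow_sub_pow (q F) 1 i
  exact PowerSeries.coeff_pow_eq_zero_of_not_modEq (coeff_eC_eq_zero_of_not_modEq_one F) _ _
    fun hmod => hn <| Nat.modEq_zero_iff_dvd.mp <|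
      hmod.trans (Nat.modEq_zero_iff_dvd.mpr hdvd)

theorem MPBC_vanishes (r : ℕ) (s : Fin r → ℕ) (u : Fin r → Polynomial F)
    (n : ℕ) (hn : ¬ (q F - 1) ∣ n) :
    MPBC F s u n = 0 := by
  rw [MPBC, Finset.sum_eq_zero, mul_zero]
  intro i _
  rw [coeff_eC_pow_q_pow_sub_one_eq_zero F _ n hn, zero_mul]

end Carlitz
end
end

section
/- For every n ∈ ℤ_{≥0}, the Bernoulli-Carlitz number satisfies BC_n = Σ_{j ≥ 0, q^j − 1 ≤ n} (Π(q^j − 1)/L_j) · {n brace q^j − 1}_C = Σ_{j ≥ 0, q^j − 1 ≤ n} ((−1)^j D_j / L_j^2) · {n brace q^j − 1}_C. -/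
/-!
The Carlitz logarithm `log_C(z) = Σ_j z^{q^j}/L_j` inverts `e_C`. Since raising to a power of `q`
is additive in characteristic `p`, `e_C(z)^{q^j} = Σ_i z^{q^{i+j}}/D_i^{q^j}`, so
`Σ_j e_C(z)^{q^j}/L_j = z` amounts to `Σ_{i+j=s} 1/(L_j D_i^{q^j}) = δ_{s,0}`. Writing
`[k] = θ^{q^k} - θ`, this follows by telescoping from `D_{i+1} = [i+1] D_i^q`,
`L_{j+1} = -L_j [j+1]` and `[a]^{q^j} = [a+j] - [j]`. Dividing by `e_C(z)` gives
`z/e_C(z) = Σ_j e_C(z)^{q^j-1}/L_j`, whose coefficients are the first formula. All base-`q`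
digits of `q^j - 1` equal `q - 1`, so `Π(q^j - 1) = ∏_{i<j} D_i^{q-1}` and
`Π(q^j - 1) L_j = (-1)^j D_j`, which turns the first formula into the second.
-/

open Polynomial PowerSeries

noncomputable section

namespace PowerSeries

variable {R : Type*} [CommRing R] (p : ℕ) [ExpChar R p]

theorem pow_expChar_pow (f : R⟦X⟧) (n : ℕ) :
    f ^ p ^ n =
      map (iterateFrobenius R p n) (expand (p ^ n) (pow_ne_zero n (expChar_ne_zero R p)) f) :=
  (MvPowerSeries.map_iterateFrobenius_expand p (expChar_ne_zero R p) f n).symm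

theorem coeff_pow_expChar_pow (f : R⟦X⟧) (n m : ℕ) :
    coeff m (f ^ p ^ n) = if p ^ n ∣ m then coeff (m / p ^ n) f ^ p ^ n else 0 := by
  rw [pow_expChar_pow p, coeff_map, coeff_expand]
  split_ifs
  · rfl
  · exact zero_pow (pow_ne_zero n (expChar_ne_zero R p))

end PowerSeries

theorem Nat.digits_base_pow_sub_one {b : ℕ} (hb : 1 < b) (j : ℕ) :
    Nat.digits b (b ^ j - 1) = List.replicate j (b - 1) := by
  induction j with
  | zero => simp
  | succ j ih =>
    have hbj : 0 < b ^ j := pow_pos (by omega) j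
    have h : b ^ (j + 1) - 1 = (b - 1) + b * (b ^ j - 1) := by
      rw [pow_succ, Nat.mul_sub, mul_one, mul_comm]
      have : b ≤ b * b ^ j := Nat.le_mul_of_pos_right b hbj
      omega
    rw [h, Nat.digits_add b hb _ _ (by omega) (Or.inl (by omega)), ih, List.replicate_succ]

namespace Carlitz

variable (F : Type) [Field F] [Fintype F]

theorem one_lt_q : 1 < q F := Fintype.one_lt_card

theorem q_pos : 0 < q F := Fintype.card_pos

section Frobenius

variable {F} {R : Type*} [CommRing R] [Algebra F R]

theorem sub_pow_q (a b : R) : (a - b) ^ q F = a ^ q F - b ^ q F :=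
  map_sub (FiniteField.frobeniusAlgHom F R) a b

theorem sub_pow_q_pow (a b : R) (j : ℕ) : (a - b) ^ q F ^ j = a ^ q F ^ j - b ^ q F ^ j := by
  induction j with
  | zero => simp
  | succ j ih =>
    rw [pow_succ, pow_mul, pow_mul, pow_mul, ih, sub_pow_q]

theorem coeff_pow_q_pow (f : R⟦X⟧) (j m : ℕ) :
    coeff m (f ^ q F ^ j) = if q F ^ j ∣ m then coeff (m / q F ^ j) f ^ q F ^ j else 0 := by
  nontriviality R
  obtain ⟨p, _, e, hp, hq⟩ := FiniteField.card' F
  have : CharP R p := charP_of_injective_algebraMap' F p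
  have : ExpChar R p := .prime hp
  rw [q, hq, ← pow_mul]
  exact PowerSeries.coeff_pow_expChar_pow p f _ m

end Frobenius

local notation "θ" => (Polynomial.X : Polynomial _)

theorem Dpoly_succ (i : ℕ) :
    Dpoly F (i + 1) = (θ ^ q F ^ (i + 1) - θ) * Dpoly F i ^ q F := by
  have hpow : Dpoly F i ^ q F =
      ∏ j ∈ Finset.range i, (θ ^ q F ^ (i + 1) - θ ^ q F ^ (j + 1)) := by
    rw [Dpoly, ← Finset.prod_pow]
    refine Finset.prod_congr rfl fun j _ => ?_
    rw [sub_pow_q, ← pow_mul, ← pow_mul, ← pow_succ, ← pow_succ]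
  rw [hpow, Dpoly, Finset.prod_range_succ', pow_zero, pow_one, mul_comm]

theorem Lpoly_succ (j : ℕ) : Lpoly F (j + 1) = -(Lpoly F j * (θ ^ q F ^ (j + 1) - θ)) := by
  rw [Lpoly, Finset.prod_range_succ, ← mul_neg, neg_sub]
  rfl

theorem X_pow_q_pow_sub_X_ne_zero {k : ℕ} (hk : k ≠ 0) : (θ ^ q F ^ k - θ : F[X]) ≠ 0 :=
  FiniteField.X_pow_card_pow_sub_X_ne_zero F hk (one_lt_q F)

theorem Dpoly_ne_zero (i : ℕ) : Dpoly F i ≠ 0 := by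
  induction i with
  | zero => simp [Dpoly]
  | succ i ih =>
    rw [Dpoly_succ]
    exact mul_ne_zero (X_pow_q_pow_sub_X_ne_zero F i.succ_ne_zero) (pow_ne_zero _ ih)

theorem Lpoly_ne_zero (j : ℕ) : Lpoly F j ≠ 0 := by
  induction j with
  | zero => simp [Lpoly]
  | succ j ih =>
    rw [Lpoly_succ, neg_ne_zero]
    exact mul_ne_zero ih (X_pow_q_pow_sub_X_ne_zero F j.succ_ne_zero)

theorem cfact_ne_zero (n : ℕ) : cfact F n ≠ 0 :=
  Finset.prod_ne_zero_iff.mpr fun i _ => pow_ne_zero _ (Dpoly_ne_zero F i)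

theorem toK_sub_mul_inv_Dpoly_pow {N j : ℕ} (hj : j ≤ N) :
    toK F (θ ^ q F ^ (N + 1) - θ ^ q F ^ j) * (toK F (Dpoly F (N + 1 - j)))⁻¹ ^ q F ^ j =
      (toK F (Dpoly F (N - j)))⁻¹ ^ q F ^ (j + 1) := by
  have hsplit :
      θ ^ q F ^ (N + 1) - θ ^ q F ^ j = (θ ^ q F ^ (N + 1 - j) - θ : F[X]) ^ q F ^ j := by
    rw [sub_pow_q_pow, ← pow_mul, ← pow_add, Nat.sub_add_cancel (by omega)]
  have hD : Dpoly F (N + 1 - j) = (θ ^ q F ^ (N + 1 - j) - θ) * Dpoly F (N - j) ^ q F := by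
    rw [show N + 1 - j = N - j + 1 by omega, Dpoly_succ]
  have hx : toK F (θ ^ q F ^ (N + 1 - j) - θ) ≠ 0 :=
    RatFunc.algebraMap_ne_zero (X_pow_q_pow_sub_X_ne_zero F (by omega))
  rw [hsplit, hD, map_pow, map_mul, map_pow, mul_inv, mul_pow, inv_pow (toK F _), ← mul_assoc,
    mul_inv_cancel₀ (pow_ne_zero _ hx), one_mul, inv_pow, inv_pow, ← pow_mul, pow_succ']

theorem toK_X_pow_sub_X_mul_inv_Lpoly_succ (j : ℕ) :
    toK F (θ ^ q F ^ (j + 1) - θ) * (toK F (Lpoly F (j + 1)))⁻¹ =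
      -(toK F (Lpoly F j))⁻¹ := by
  have hy : toK F (θ ^ q F ^ (j + 1) - θ) ≠ 0 :=
    RatFunc.algebraMap_ne_zero (X_pow_q_pow_sub_X_ne_zero F j.succ_ne_zero)
  rw [Lpoly_succ, map_neg, map_mul]
  field_simp

theorem sum_inv_Lpoly_mul_inv_Dpoly_pow (s : ℕ) :
    ∑ j ∈ Finset.range (s + 1),
        (toK F (Lpoly F j))⁻¹ * (toK F (Dpoly F (s - j)))⁻¹ ^ q F ^ j =
      if s = 0 then 1 else 0 := by
  cases s with
  | zero => simp [Lpoly, Dpoly]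
  | succ N =>
    set T : ℕ → RatFunc F := fun j =>
      (toK F (Lpoly F j))⁻¹ * (toK F (Dpoly F (N + 1 - j)))⁻¹ ^ q F ^ j
    set U : ℕ → RatFunc F := fun j =>
      (toK F (Lpoly F j))⁻¹ * (toK F (Dpoly F (N - j)))⁻¹ ^ q F ^ (j + 1)
    have hA : ∀ j ≤ N, toK F (θ ^ q F ^ (N + 1) - θ ^ q F ^ j) * T j = U j := fun j hj => by
      simp only [T, U]
      rw [mul_left_comm, toK_sub_mul_inv_Dpoly_pow F hj]
    have hB : ∀ j ≤ N, toK F (θ ^ q F ^ (j + 1) - θ) * T (j + 1) = -U j := fun j _ => by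
      simp only [T, U, Nat.add_sub_add_right]
      rw [← mul_assoc, toK_X_pow_sub_X_mul_inv_Lpoly_succ, neg_mul]
    have hb : toK F (θ ^ q F ^ (N + 1) - θ) ≠ 0 :=
      RatFunc.algebraMap_ne_zero (X_pow_q_pow_sub_X_ne_zero F N.succ_ne_zero)
    rw [if_neg N.succ_ne_zero]
    change ∑ j ∈ Finset.range (N + 2), T j = 0
    refine (mul_eq_zero.mp ?_).resolve_left hb
    -- split `[N+1] = ([N+1] - [j]) + [j]` with `[k] = θ^{q^k} - θ`: the two halves telescope
    calc toK F (θ ^ q F ^ (N + 1) - θ) * ∑ j ∈ Finset.range (N + 2), T j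
        = ∑ j ∈ Finset.range (N + 2),
            (toK F (θ ^ q F ^ (N + 1) - θ ^ q F ^ j) * T j +
              toK F (θ ^ q F ^ j - θ) * T j) := by
          rw [Finset.mul_sum]
          refine Finset.sum_congr rfl fun j _ => ?_
          rw [← add_mul, ← map_add, sub_add_sub_cancel]
      _ = ∑ j ∈ Finset.range (N + 1), U j + ∑ j ∈ Finset.range (N + 1), -U j := by
          rw [Finset.sum_add_distrib, Finset.sum_range_succ, Finset.sum_range_succ' _ (N + 1),
            sub_self, map_zero, zero_mul, add_zero, pow_zero, pow_one, sub_self, map_zero,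
            zero_mul, add_zero]
          congr 1 <;> refine Finset.sum_congr rfl fun j hj => ?_
          exacts [hA j (Finset.mem_range_succ_iff.mp hj), hB j (Finset.mem_range_succ_iff.mp hj)]
      _ = 0 := by rw [Finset.sum_neg_distrib, add_neg_cancel]

theorem coeff_eC_q_pow (i : ℕ) : coeff (q F ^ i) (eC F) = (toK F (Dpoly F i))⁻¹ := by
  rw [eC, coeff_mk, Finset.sum_eq_single_of_mem i
    (Finset.mem_range_succ_iff.mpr (Nat.lt_pow_self (one_lt_q F)).le), if_pos rfl]
  exact fun j _ hji => if_neg fun h => hji (Nat.pow_right_injective (one_lt_q F) h)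

theorem coeff_eC_of_forall_ne {m : ℕ} (hm : ∀ i, q F ^ i ≠ m) : coeff m (eC F) = 0 := by
  rw [eC, coeff_mk]
  exact Finset.sum_eq_zero fun i _ => if_neg (hm i)

theorem constantCoeff_eC : constantCoeff (eC F) = 0 :=
  (coeff_zero_eq_constantCoeff_apply _).symm.trans
    (coeff_eC_of_forall_ne F fun i => (pow_pos (q_pos F) i).ne')

theorem coeff_eC_pow_of_lt {m k : ℕ} (h : m < k) : coeff m (eC F ^ k) = 0 :=
  X_pow_dvd_iff.mp (pow_dvd_pow_of_dvd (PowerSeries.X_dvd_iff.mpr (constantCoeff_eC F)) k) m h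

theorem coeff_eC_pow_q_pow_q_pow (s j : ℕ) :
    coeff (q F ^ s) (eC F ^ q F ^ j) =
      if j ≤ s then (toK F (Dpoly F (s - j)))⁻¹ ^ q F ^ j else 0 := by
  simp only [coeff_pow_q_pow, Nat.pow_dvd_pow_iff_le_right (one_lt_q F)]
  split_ifs with hjs
  · rw [Nat.pow_div hjs (q_pos F), coeff_eC_q_pow]
  · rfl

theorem coeff_eC_pow_q_pow_of_forall_ne {m : ℕ} (hm : ∀ s, q F ^ s ≠ m) (j : ℕ) :
    coeff m (eC F ^ q F ^ j) = 0 := by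
  rw [coeff_pow_q_pow]
  split_ifs with hd
  · rw [coeff_eC_of_forall_ne F fun i hi => hm (i + j) <| by
        rw [pow_add, hi, Nat.div_mul_cancel hd], zero_pow (pow_pos (q_pos F) j).ne']
  · rfl

theorem sum_inv_Lpoly_mul_coeff_eC_pow_q_pow (m : ℕ) :
    ∑ j ∈ Finset.range (m + 1), (toK F (Lpoly F j))⁻¹ * coeff m (eC F ^ q F ^ j) =
      coeff m (PowerSeries.X : (RatFunc F)⟦X⟧) := by
  rw [PowerSeries.coeff_X]
  by_cases hm : ∃ s, q F ^ s = m
  · obtain ⟨s, rfl⟩ := hm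
    have hs : s + 1 ≤ q F ^ s + 1 := Nat.succ_le_succ (Nat.lt_pow_self (one_lt_q F)).le
    have hhigh : ∑ j ∈ Finset.Ico (s + 1) (q F ^ s + 1),
        (toK F (Lpoly F j))⁻¹ * coeff (q F ^ s) (eC F ^ q F ^ j) = 0 :=
      Finset.sum_eq_zero fun j hj => by
        rw [coeff_eC_pow_q_pow_q_pow, if_neg (by simp at hj; omega), mul_zero]
    rw [← Finset.sum_range_add_sum_Ico _ hs, hhigh, add_zero,
      Finset.sum_congr rfl fun j hj => by
        rw [coeff_eC_pow_q_pow_q_pow, if_pos (Finset.mem_range_succ_iff.mp hj)],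
      sum_inv_Lpoly_mul_inv_Dpoly_pow]
    simp only [Nat.pow_eq_one, (one_lt_q F).ne', false_or]
  · rw [if_neg fun h => hm ⟨0, by rw [pow_zero, h]⟩]
    exact Finset.sum_eq_zero fun j _ => by
      rw [coeff_eC_pow_q_pow_of_forall_ne F (not_exists.mp hm), mul_zero]

theorem sum_range_inv_Lpoly_mul_coeff_eC_pow_of_le {m N : ℕ} (h : m ≤ N) :
    ∑ j ∈ Finset.range (N + 1), (toK F (Lpoly F j))⁻¹ * coeff m (eC F ^ (q F ^ j - 1)) =
      ∑ j ∈ Finset.range (m + 1),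
        (toK F (Lpoly F j))⁻¹ * coeff m (eC F ^ (q F ^ j - 1)) := by
  refine (Finset.sum_subset (Finset.range_subset_range.mpr (by omega)) fun j _ hj => ?_).symm
  have hmj : m < j := by simpa using hj
  have hj : j < q F ^ j := Nat.lt_pow_self (one_lt_q F)
  rw [coeff_eC_pow_of_lt F (by omega), mul_zero]

theorem eC_mul_sum_inv_Lpoly_mul_eC_pow :
    eC F * mk (fun m => ∑ j ∈ Finset.range (m + 1),
      (toK F (Lpoly F j))⁻¹ * coeff m (eC F ^ (q F ^ j - 1))) = PowerSeries.X := by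
  ext m
  set W : (RatFunc F)⟦X⟧ := ∑ j ∈ Finset.range (m + 1),
    PowerSeries.C (toK F (Lpoly F j))⁻¹ * eC F ^ (q F ^ j - 1)
  have htrunc : trunc (m + 1) (mk fun m => ∑ j ∈ Finset.range (m + 1),
      (toK F (Lpoly F j))⁻¹ * coeff m (eC F ^ (q F ^ j - 1))) = trunc (m + 1) W := by
    ext b
    rw [coeff_trunc, coeff_trunc]
    split_ifs with hb
    · simp only [coeff_mk, W, map_sum, PowerSeries.coeff_C_mul]
      exact (sum_range_inv_Lpoly_mul_coeff_eC_pow_of_le F (Nat.lt_succ_iff.mp hb)).symm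
    · rfl
  rw [coeff_mul_eq_coeff_trunc_mul_trunc _ _ m.lt_succ_self, htrunc,
    ← coeff_mul_eq_coeff_trunc_mul_trunc _ _ m.lt_succ_self, Finset.mul_sum, map_sum,
    ← sum_inv_Lpoly_mul_coeff_eC_pow_q_pow]
  refine Finset.sum_congr rfl fun j _ => ?_
  rw [mul_left_comm, mul_pow_sub_one (pow_pos (q_pos F) j).ne', PowerSeries.coeff_C_mul]

theorem inv_eC_div_X :
    (mk fun m => coeff (m + 1) (eC F))⁻¹ = mk fun m => ∑ j ∈ Finset.range (m + 1),
      (toK F (Lpoly F j))⁻¹ * coeff m (eC F ^ (q F ^ j - 1)) := by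
  set u : (RatFunc F)⟦X⟧ := mk fun m => coeff (m + 1) (eC F)
  have hu : eC F = PowerSeries.X * u := by
    simpa [constantCoeff_eC] using eq_X_mul_shift_add_const (eC F)
  have hmul : u * _ = 1 := mul_left_cancel₀ PowerSeries.X_ne_zero <| by
    rw [← mul_assoc, ← hu, eC_mul_sum_inv_Lpoly_mul_eC_pow, mul_one]
  have hu0 : constantCoeff u ≠ 0 :=
    left_ne_zero_of_mul_eq_one (by rw [← map_mul, hmul, map_one])
  exact ((PowerSeries.eq_inv_iff_mul_eq_one hu0).mpr (by rw [mul_comm, hmul])).symm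

theorem cfact_q_pow_sub_one (j : ℕ) :
    cfact F (q F ^ j - 1) = ∏ i ∈ Finset.range j, Dpoly F i ^ (q F - 1) := by
  rw [cfact, Nat.digits_base_pow_sub_one (one_lt_q F), List.length_replicate]
  refine Finset.prod_congr rfl fun i hi => ?_
  rw [List.getD_eq_getElem _ _ (by simpa using hi), List.getElem_replicate]

theorem cfact_q_pow_sub_one_mul_Lpoly (j : ℕ) :
    cfact F (q F ^ j - 1) * Lpoly F j = (-1) ^ j * Dpoly F j := by
  rw [cfact_q_pow_sub_one]
  induction j with
  | zero => simp [Lpoly, Dpoly]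
  | succ j ih =>
    rw [Finset.prod_range_succ, Lpoly_succ, Dpoly_succ,
      ← mul_pow_sub_one (q_pos F).ne' (Dpoly F j)]
    linear_combination (-(Dpoly F j ^ (q F - 1) * (θ ^ q F ^ (j + 1) - θ : F[X]))) * ih

theorem cfact_q_pow_sub_one_div_Lpoly (j : ℕ) :
    toK F (cfact F (q F ^ j - 1)) / toK F (Lpoly F j) =
      (-1) ^ j * toK F (Dpoly F j) / toK F (Lpoly F j) ^ 2 := by
  have hL : toK F (Lpoly F j) ≠ 0 := RatFunc.algebraMap_ne_zero (Lpoly_ne_zero F j)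
  have h := congrArg (toK F) (cfact_q_pow_sub_one_mul_Lpoly F j)
  rw [map_mul, map_mul, map_pow, map_neg, map_one] at h
  rw [div_eq_div_iff hL (pow_ne_zero 2 hL)]
  linear_combination toK F (Lpoly F j) * h

theorem cfact_mul_StC (n m : ℕ) :
    toK F (cfact F m) * StC F n m = toK F (cfact F n) * coeff n (eC F ^ m) := by
  have hm : toK F (cfact F m) ≠ 0 := RatFunc.algebraMap_ne_zero (cfact_ne_zero F m)
  rw [StC]
  field_simp

/-- For every `n ≥ 0`,
`BC_n = Σ_{j ≥ 0, q^j − 1 ≤ n} (Π(q^j − 1)/L_j) · {n brace q^j − 1}_C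
      = Σ_{j ≥ 0, q^j − 1 ≤ n} ((−1)^j D_j/L_j^2) · {n brace q^j − 1}_C`.
(Any `j` with `q^j − 1 ≤ n` satisfies `j ≤ n`, so the range below exhausts all such `j`.) -/
theorem BCnum_eq_sum_StC (n : ℕ) :
    BCnum F n =
      ∑ j ∈ (Finset.range (n + 1)).filter (fun j => (q F) ^ j - 1 ≤ n),
        toK F (cfact F ((q F) ^ j - 1)) / toK F (Lpoly F j) * StC F n ((q F) ^ j - 1) ∧
    BCnum F n =
      ∑ j ∈ (Finset.range (n + 1)).filter (fun j => (q F) ^ j - 1 ≤ n),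
        (-1 : RatFunc F) ^ j * toK F (Dpoly F j) / (toK F (Lpoly F j)) ^ 2 *
          StC F n ((q F) ^ j - 1) := by
  have hterm : ∀ j,
      toK F (cfact F (q F ^ j - 1)) / toK F (Lpoly F j) * StC F n (q F ^ j - 1) =
        toK F (cfact F n) * ((toK F (Lpoly F j))⁻¹ * coeff n (eC F ^ (q F ^ j - 1))) := by
    intro j
    rw [div_mul_eq_mul_div, cfact_mul_StC]
    ring
  have hfirst : BCnum F n = ∑ j ∈ (Finset.range (n + 1)).filter (fun j => q F ^ j - 1 ≤ n),
      toK F (cfact F (q F ^ j - 1)) / toK F (Lpoly F j) * StC F n (q F ^ j - 1) := by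
    rw [Finset.sum_congr rfl fun j _ => hterm j, BCnum, inv_eC_div_X, coeff_mk, Finset.mul_sum]
    refine (Finset.sum_filter_of_ne fun j _ hj => ?_).symm
    by_contra hlt
    rw [coeff_eC_pow_of_lt F (not_le.mp hlt), mul_zero, mul_zero] at hj
    exact hj rfl
  refine ⟨hfirst, hfirst.trans (Finset.sum_congr rfl fun j _ => ?_)⟩
  rw [cfact_q_pow_sub_one_div_Lpoly]

end Carlitz
end
end
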